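/- Let (W,S) be a Coxeter system, I ⊆ S with W_I finite, I° = { s ∈ I : L(s)=0 }, I⁺ = I \ I°, and let w°_I be the minimal-length element of the coset W_{I°} w_I where w_I is the longest element of W_I. Then for every a ∈ W_{I°} and every t ∈ I⁺, we have t·(a w°_I) < a w°_I in Bruhat order (equivalently ℓ(t a w°_I) < ℓ(a w°_I)). -/

import Mathlib

/-!
Write `a * w°_I = b * w_I` with `b ∈ W_{I°}`. A weight vanishing on `I°` is invariant under left
multiplication by `W_{I°}`, so `L (a w°_I) = L w_I`. If `s_i` were a left ascent of `a w°_I`, the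
element `s_i a w°_I ∈ W_I` would have weight `L s_i + L w_I > L w_I`. But every `x ∈ W_I` can be
raised by left ascents `s_j`, `j ∈ I`, which do not decrease `L`, until every `s_j` is a left
descent, and the only such element of `W_I` is `w_I`; hence `L x ≤ L w_I` on `W_I`. That uniqueness
rests on the exchange condition inside `W_I`, which follows from Tits' parity cocycle.
-/

namespace Stmt17

variable {B W Γ : Type*} [Group W] [AddCommGroup Γ] [LinearOrder Γ] [IsOrderedAddMonoid Γ]
variable {M : CoxeterMatrix B} (cs : CoxeterSystem M W)

/-- The standard parabolic subgroup `W_I`. -/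
def par (I : Set B) : Subgroup W := Subgroup.closure (cs.simple '' I)

open CoxeterSystem

local prefix:100 "s" => cs.simple
local prefix:100 "π" => cs.wordProd
local prefix:100 "ris" => cs.rightInvSeq
local prefix:100 "ℓ" => cs.length

theorem conj_eq_iff_eq_conj {G : Type*} [Group G] (a u v : G) :
    a * u * a⁻¹ = v ↔ u = a⁻¹ * v * a := by
  constructor <;> rintro rfl <;> group

theorem zmod_two_eq_zero_of_ne_one {x : ZMod 2} (h : x ≠ 1) : x = 0 := by
  revert x; decide

theorem simple_mul_mul_simple_eq_iff (i : B) (u v : W) :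
    s i * u * s i = v ↔ u = s i * v * s i := by
  constructor <;> rintro rfl <;> simp [mul_assoc]

theorem simple_mul_mul_simple_eq_simple_iff (i : B) (u : W) : s i * u * s i = s i ↔ u = s i := by
  simp [mul_assoc, mul_eq_one_iff_eq_inv]

theorem inv_pow_mul_simple (i j : B) (n : ℕ) :
    ((s i * s j) ^ n)⁻¹ * s j = s j * (s i * s j) ^ n := by
  have h : s j * (s i * s j) ^ n * (s j)⁻¹ = ((s i * s j) ^ n)⁻¹ := by
    rw [← conj_pow, ← inv_pow]
    simp [mul_assoc]
  rw [← h, cs.inv_simple, mul_assoc, cs.simple_mul_simple_self, mul_one]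

section InversionParity

open scoped Classical

noncomputable def simpleAction (i : B) : Equiv.Perm (W × ZMod 2) :=
  Function.Involutive.toPerm
    (fun p => (s i * p.1 * s i, p.2 + if p.1 = s i then 1 else 0))
    fun p => by
      simp only [simple_mul_mul_simple_eq_simple_iff, add_assoc, CharTwo.add_self_eq_zero, add_zero]
      simp [mul_assoc]

theorem simpleAction_apply (i : B) (u : W) (ε : ZMod 2) :
    simpleAction cs i (u, ε) = (s i * u * s i, ε + if u = s i then 1 else 0) := rfl

theorem simpleAction_mul_pow_apply (i j : B) (n : ℕ) (u : W) (ε : ZMod 2) :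
    ((simpleAction cs i * simpleAction cs j) ^ n) (u, ε) =
      ((s i * s j) ^ n * u * ((s i * s j) ^ n)⁻¹,
        ε + ∑ l ∈ Finset.range (2 * n), if u = s j * (s i * s j) ^ l then 1 else 0) := by
  induction n with
  | zero => simp
  | succ n ih =>
    have hp := inv_pow_mul_simple cs i j n
    set p := s i * s j
    have h₁ : p ^ n * u * (p ^ n)⁻¹ = s j ↔ u = s j * p ^ (2 * n) := by
      rw [conj_eq_iff_eq_conj, hp, mul_assoc, ← pow_add, two_mul]
    have h₂ : s j * (p ^ n * u * (p ^ n)⁻¹) * s j = s i ↔ u = s j * p ^ (2 * n + 1) := by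
      rw [simple_mul_mul_simple_eq_iff, conj_eq_iff_eq_conj,
        show (p ^ n)⁻¹ * (s j * s i * s j) * p ^ n = (p ^ n)⁻¹ * s j * p * p ^ n by
          simp only [p, mul_assoc],
        hp, mul_assoc, mul_assoc, ← pow_succ', ← pow_add, show n + (n + 1) = 2 * n + 1 by ring]
    rw [pow_succ', Equiv.Perm.mul_apply, Equiv.Perm.mul_apply, ih, simpleAction_apply,
      simpleAction_apply, h₁, h₂, Nat.mul_succ, Finset.sum_range_succ, Finset.sum_range_succ,
      pow_succ' p n, mul_inv_rev]
    simp [p, mul_assoc, add_assoc]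

theorem simpleAction_isLiftable : M.IsLiftable (simpleAction cs) := by
  intro i j
  ext ⟨u, ε⟩ : 1
  -- the `2 m` summands are `m`-periodic in `l`, so they cancel in pairs
  rw [simpleAction_mul_pow_apply, cs.simple_mul_simple_pow, two_mul, Finset.sum_range_add]
  simp [pow_add, CharTwo.add_self_eq_zero]

noncomputable def parityAction : W →* Equiv.Perm (W × ZMod 2) :=
  cs.lift ⟨simpleAction cs, simpleAction_isLiftable cs⟩

/-- `inversionParity w t` is the parity of the number of occurrences of `t` in the right inversion
sequence of any word for `w` (`inversionParity_wordProd`); reading it off a representation of `W`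
makes it independent of the word. -/
noncomputable def inversionParity (w u : W) : ZMod 2 := (parityAction cs w (u, 0)).2

theorem parityAction_simple (i : B) : parityAction cs (s i) = simpleAction cs i :=
  cs.lift_apply_simple (simpleAction_isLiftable cs) i

theorem parityAction_apply (w u : W) (ε : ZMod 2) :
    parityAction cs w (u, ε) = (w * u * w⁻¹, ε + inversionParity cs w u) := by
  induction w using cs.simple_induction_left generalizing ε with
  | one => simp [inversionParity]
  | mul_simple_left w i ih =>
    change _ = (_, ε + (parityAction cs (s i * w) (u, 0)).2)
    simp only [map_mul, Equiv.Perm.mul_apply, parityAction_simple, ih, simpleAction_apply,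
      mul_inv_rev, cs.inv_simple, mul_assoc, zero_add, add_assoc]

theorem inversionParity_mul (w₁ w₂ u : W) :
    inversionParity cs (w₁ * w₂) u =
      inversionParity cs w₂ u + inversionParity cs w₁ (w₂ * u * w₂⁻¹) := by
  rw [inversionParity, map_mul, Equiv.Perm.mul_apply, parityAction_apply, parityAction_apply,
    zero_add]

theorem inversionParity_one (u : W) : inversionParity cs 1 u = 0 := by
  simp [inversionParity]

theorem inversionParity_simple (i : B) (u : W) :
    inversionParity cs (s i) u = if u = s i then 1 else 0 := by
  simp [inversionParity, parityAction_simple, simpleAction_apply]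

theorem inversionParity_inv (w u : W) :
    inversionParity cs w⁻¹ u = inversionParity cs w (w⁻¹ * u * w) := by
  have h := inversionParity_mul cs w w⁻¹ u
  rw [mul_inv_cancel, inversionParity_one, inv_inv] at h
  exact CharTwo.add_eq_zero.mp h.symm

theorem inversionParity_wordProd (ω : List B) (t : W) :
    inversionParity cs (π ω) t = ((ris ω).count t : ZMod 2) := by
  induction ω with
  | nil => simp [inversionParity_one]
  | cons i ω ih =>
    rw [cs.wordProd_cons, inversionParity_mul, inversionParity_simple, ih, rightInvSeq,
      List.count_cons, conj_eq_iff_eq_conj]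
    by_cases h : t = (π ω)⁻¹ * s i * π ω
    · simp [h]
    · simp [h, Ne.symm h]

theorem inversionParity_self {t : W} (ht : cs.IsReflection t) :
    inversionParity cs t t = 1 := by
  obtain ⟨v, k, rfl⟩ := ht
  have hconj : v⁻¹ * (v * s k * v⁻¹) * v = s k := by group
  rw [inversionParity_mul, inversionParity_inv, inv_inv, hconj, inversionParity_mul,
    inversionParity_simple, if_pos rfl, cs.simple_mul_simple_self, one_mul, cs.inv_simple,
    add_comm 1, ← add_assoc, CharTwo.add_self_eq_zero, zero_add]

theorem mem_rightInvSeq_of_inversionParity_eq_one {ω : List B} {t : W}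
    (h : inversionParity cs (π ω) t = 1) : t ∈ ris ω := by
  rw [inversionParity_wordProd] at h
  exact List.count_pos_iff.mp (Nat.pos_of_ne_zero fun h₀ => by simp [h₀] at h)

theorem isRightInversion_of_inversionParity_eq_one {w t : W}
    (h : inversionParity cs w t = 1) : cs.IsRightInversion w t := by
  obtain ⟨ω, hω, rfl⟩ := cs.exists_isReduced w
  exact cs.isRightInversion_of_mem_rightInvSeq hω (mem_rightInvSeq_of_inversionParity_eq_one cs h)

theorem inversionParity_eq_one_iff {w t : W} (ht : cs.IsReflection t) :
    inversionParity cs w t = 1 ↔ cs.IsRightInversion w t := by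
  refine ⟨isRightInversion_of_inversionParity_eq_one cs, fun h => ?_⟩
  have h₀ : inversionParity cs (w * t) t = 0 := zmod_two_eq_zero_of_ne_one fun h' =>
    ht.not_isRightInversion_mul_left_iff.mpr h (isRightInversion_of_inversionParity_eq_one cs h')
  calc inversionParity cs w t = inversionParity cs (w * t * t) t := by
        rw [mul_assoc, ht.mul_self, mul_one]
    _ = 1 := by
        rw [inversionParity_mul, inversionParity_self cs ht, mul_inv_cancel_right, h₀, add_zero]

end InversionParity

theorem inversionParity_inv_of_isLeftInversion {w t : W} (h : cs.IsLeftInversion w t) :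
    inversionParity cs w⁻¹ t = 1 :=
  (inversionParity_eq_one_iff cs h.1).mpr (cs.isRightInversion_inv_iff.mpr h)

theorem mem_rightInvSeq_of_isRightInversion {ω : List B} {t : W}
    (h : cs.IsRightInversion (π ω) t) : t ∈ ris ω :=
  mem_rightInvSeq_of_inversionParity_eq_one cs ((inversionParity_eq_one_iff cs h.1).mpr h)

theorem exists_wordProd_mul_eq_wordProd_eraseIdx {ω : List B} {t : W}
    (h : cs.IsRightInversion (π ω) t) : ∃ j < ω.length, π ω * t = π (ω.eraseIdx j) := by
  obtain ⟨j, hj, rfl⟩ := List.mem_iff_getElem.mp (mem_rightInvSeq_of_isRightInversion cs h)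
  refine ⟨j, by simpa using hj, ?_⟩
  rw [← List.getD_eq_getElem _ 1 hj, cs.wordProd_mul_getD_rightInvSeq]

theorem exists_isReduced_sublist (ω : List B) :
    ∃ ω' : List B, ω'.Sublist ω ∧ cs.IsReduced ω' ∧ π ω' = π ω := by
  induction ω using List.reverseRecOn with
  | nil => exact ⟨[], .refl _, by simp [CoxeterSystem.IsReduced], rfl⟩
  | append_singleton ρ k ih =>
    obtain ⟨ρ', hsub, hred, hprod⟩ := ih
    have hprod' : π (ρ ++ [k]) = π ρ' * s k := by
      rw [cs.wordProd_append, cs.wordProd_singleton, hprod]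
    rcases cs.length_mul_simple (π ρ') k with hasc | hdesc
    · refine ⟨ρ' ++ [k], hsub.append (.refl _), ?_, ?_⟩
      · rw [CoxeterSystem.IsReduced, cs.wordProd_append, cs.wordProd_singleton, hasc, hred.eq,
          List.length_append, List.length_singleton]
      · rw [hprod', cs.wordProd_append, cs.wordProd_singleton]
    · obtain ⟨j, hj, he⟩ :=
        exists_wordProd_mul_eq_wordProd_eraseIdx cs (ω := ρ') ⟨cs.isReflection_simple k, by omega⟩
      refine ⟨ρ'.eraseIdx j, (List.eraseIdx_sublist _ _).trans
        (hsub.trans (List.sublist_append_left _ _)), ?_, by rw [hprod', he]⟩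
      have hlen := List.length_eraseIdx_add_one hj
      rw [CoxeterSystem.IsReduced] at hred ⊢
      rw [← he]
      omega

theorem simple_mem_par {X : Set B} {j : B} (hj : j ∈ X) : s j ∈ par cs X :=
  Subgroup.subset_closure ⟨j, hj, rfl⟩

theorem par_mono {X Y : Set B} (h : X ⊆ Y) : par cs X ≤ par cs Y :=
  Subgroup.closure_mono (Set.image_mono h)

theorem exists_wordProd_eq_of_mem_par {X : Set B} {x : W} (hx : x ∈ par cs X) :
    ∃ ω : List B, (∀ j ∈ ω, j ∈ X) ∧ π ω = x := by
  induction hx using Subgroup.closure_induction with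
  | mem y hy =>
    obtain ⟨j, hj, rfl⟩ := hy
    exact ⟨[j], by simpa using hj, cs.wordProd_singleton j⟩
  | one => exact ⟨[], by simp, cs.wordProd_nil⟩
  | mul y z _ _ hy hz =>
    obtain ⟨ω₁, h₁, rfl⟩ := hy
    obtain ⟨ω₂, h₂, rfl⟩ := hz
    refine ⟨ω₁ ++ ω₂, fun j hj => ?_, cs.wordProd_append ω₁ ω₂⟩
    rcases List.mem_append.mp hj with hj | hj
    exacts [h₁ j hj, h₂ j hj]
  | inv y _ hy =>
    obtain ⟨ω, h, rfl⟩ := hy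
    exact ⟨ω.reverse, fun j hj => h j (List.mem_reverse.mp hj), cs.wordProd_reverse ω⟩

theorem exists_isReduced_of_mem_par {X : Set B} {x : W} (hx : x ∈ par cs X) :
    ∃ ω : List B, (∀ j ∈ ω, j ∈ X) ∧ cs.IsReduced ω ∧ π ω = x := by
  obtain ⟨ω, hX, rfl⟩ := exists_wordProd_eq_of_mem_par cs hx
  obtain ⟨ω', hsub, hred, hprod⟩ := exists_isReduced_sublist cs ω
  exact ⟨ω', fun j hj => hX j (hsub.subset hj), hred, hprod⟩

theorem exists_isLeftDescent_of_mem_par {X : Set B} {x : W} (hx : x ∈ par cs X) (hne : x ≠ 1) :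
    ∃ j ∈ X, cs.IsLeftDescent x j := by
  obtain ⟨ω, hX, hred, rfl⟩ := exists_isReduced_of_mem_par cs hx
  cases ω with
  | nil => exact absurd cs.wordProd_nil hne
  | cons j ρ =>
    refine ⟨j, hX j List.mem_cons_self, ?_⟩
    rw [IsLeftDescent, hred.eq, cs.wordProd_cons, cs.simple_mul_simple_cancel_left,
      List.length_cons]
    exact Nat.lt_succ_of_le (cs.length_wordProd_le ρ)

def IsLongest (I : Set B) (w : W) : Prop := w ∈ par cs I ∧ ∀ v ∈ par cs I, ℓ v ≤ ℓ w

section Longest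

variable {cs}

theorem IsLongest.isLeftInversion {I : Set B} {w t : W} (hw : IsLongest cs I w)
    (ht : cs.IsReflection t) (htI : t ∈ par cs I) : cs.IsLeftInversion w t :=
  ⟨ht, lt_of_le_of_ne (hw.2 _ (mul_mem htI hw.1)) (ht.length_mul_right_ne w)⟩

/-- For `u = z w⁻¹ ≠ 1`, a left descent `s_j` of `u` with `j ∈ I` turns the cocycle identity for
`z⁻¹ = w⁻¹ u⁻¹` at `s_j` into `1 = 1 + 1`: `s_j` is a left inversion of `z` and of `u`, and the
reflection `u⁻¹ s_j u ∈ W_I` is a left inversion of `w`. -/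
theorem IsLongest.eq_of_forall_isLeftDescent {I : Set B} {w z : W} (hw : IsLongest cs I w)
    (hz : z ∈ par cs I) (hdesc : ∀ j ∈ I, cs.IsLeftDescent z j) : z = w := by
  by_contra hne
  have hu : z * w⁻¹ ∈ par cs I := mul_mem hz (inv_mem hw.1)
  obtain ⟨j, hjI, hj⟩ :=
    exists_isLeftDescent_of_mem_par cs hu fun h => hne (mul_inv_eq_one.mp h)
  have key := inversionParity_mul cs w⁻¹ (z * w⁻¹)⁻¹ (s j)
  rw [show w⁻¹ * (z * w⁻¹)⁻¹ = z⁻¹ by group,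
    inversionParity_inv_of_isLeftInversion cs
      ((cs.isLeftInversion_simple_iff_isLeftDescent z j).mpr (hdesc j hjI)),
    inversionParity_inv_of_isLeftInversion cs
      ((cs.isLeftInversion_simple_iff_isLeftDescent _ j).mpr hj),
    inversionParity_inv_of_isLeftInversion cs (hw.isLeftInversion
      ((cs.isReflection_simple j).conj _)
      (mul_mem (mul_mem (inv_mem hu) (simple_mem_par cs hjI)) (inv_mem (inv_mem hu))))] at key
  exact absurd key (by decide)

end Longest

section Weight

variable {Λ : Type*} [AddCommMonoid Λ]

def IsWeight (L : W → Λ) : Prop :=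
  ∀ u v : W, ℓ (u * v) = ℓ u + ℓ v → L (u * v) = L u + L v

variable {cs}

theorem IsWeight.simple_mul {L : W → Λ} (hL : IsWeight cs L) {x : W} {j : B}
    (h : ℓ x < ℓ (s j * x)) : L (s j * x) = L (s j) + L x :=
  hL _ _ (by rw [cs.length_simple]; rcases cs.length_simple_mul x j with h' | h' <;> omega)

theorem IsWeight.mul_of_mem_par {L : W → Λ} (hL : IsWeight cs L) {X : Set B}
    (hX : ∀ j ∈ X, L (s j) = 0) {g : W} (hg : g ∈ par cs X) (x : W) : L (g * x) = L x := by
  induction hg using Subgroup.closure_induction generalizing x with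
  | mem y hy =>
    obtain ⟨j, hj, rfl⟩ := hy
    rcases lt_or_gt_of_ne (cs.length_simple_mul_ne x j) with hlt | hlt
    · have h := hL.simple_mul (x := s j * x) (j := j)
        (by rwa [cs.simple_mul_simple_cancel_left])
      rw [cs.simple_mul_simple_cancel_left, hX j hj, zero_add] at h
      exact h.symm
    · rw [hL.simple_mul hlt, hX j hj, zero_add]
  | one => rw [one_mul]
  | mul g h _ _ ihg ihh => rw [mul_assoc, ihg, ihh]
  | inv g _ ih => rw [← ih (g⁻¹ * x), mul_inv_cancel_left]

theorem IsWeight.le_of_isLongest [PartialOrder Λ] [IsOrderedAddMonoid Λ] {L : W → Λ}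
    (hL : IsWeight cs L) (hnonneg : ∀ j, 0 ≤ L (s j)) {I : Set B} {w x : W}
    (hw : IsLongest cs I w) (hx : x ∈ par cs I) : L x ≤ L w := by
  induction hn : ℓ w - ℓ x using Nat.strong_induction_on generalizing x with
  | _ n ih =>
    by_cases hdesc : ∀ j ∈ I, cs.IsLeftDescent x j
    · rw [hw.eq_of_forall_isLeftDescent hx hdesc]
    push Not at hdesc
    obtain ⟨j, hjI, hasc⟩ := hdesc
    have hlt : ℓ x < ℓ (s j * x) :=
      lt_of_le_of_ne (not_lt.mp hasc) (cs.length_simple_mul_ne x j).symm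
    have hsx : s j * x ∈ par cs I := mul_mem (simple_mem_par cs hjI) hx
    have hle : ℓ (s j * x) ≤ ℓ w := hw.2 _ hsx
    calc L x ≤ L (s j) + L x := le_add_of_nonneg_left (hnonneg j)
      _ = L (s j * x) := (hL.simple_mul hlt).symm
      _ ≤ L w := ih _ (by omega) hsx rfl

end Weight

theorem stmt17 (L : W → Γ)
    (hweight : ∀ u v : W, cs.length (u * v) = cs.length u + cs.length v →
      L (u * v) = L u + L v)
    (hnonneg : ∀ i : B, 0 ≤ L (cs.simple i))
    (I : Set B)
    (wI : W) (hwI : wI ∈ par cs I ∧ ∀ v ∈ par cs I, cs.length v ≤ cs.length wI)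
    (w0c : W)
    (hw0c : (∃ g ∈ par cs {i | i ∈ I ∧ L (cs.simple i) = 0}, w0c = g * wI) ∧
      ∀ g ∈ par cs {i | i ∈ I ∧ L (cs.simple i) = 0}, cs.length w0c ≤ cs.length (g * wI))
    (a : W) (ha : a ∈ par cs {i | i ∈ I ∧ L (cs.simple i) = 0})
    (i : B) (hi : i ∈ I) (hipos : 0 < L (cs.simple i)) :
    cs.length (cs.simple i * (a * w0c)) < cs.length (a * w0c) := by
  obtain ⟨⟨g, hg, rfl⟩, -⟩ := hw0c
  have hL : IsWeight cs L := hweight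
  have hzero : par cs {i | i ∈ I ∧ L (s i) = 0} ≤ par cs I := par_mono cs fun j hj => hj.1
  have hy : a * (g * wI) ∈ par cs I := mul_mem (hzero ha) (mul_mem (hzero hg) hwI.1)
  have hLy : L (a * (g * wI)) = L wI := by
    rw [← mul_assoc]
    exact hL.mul_of_mem_par (fun j hj => hj.2) (mul_mem ha hg) wI
  by_contra! hle
  have hasc : ℓ (a * (g * wI)) < ℓ (s i * (a * (g * wI))) :=
    lt_of_le_of_ne hle (cs.length_simple_mul_ne _ i).symm
  have hbound := hL.le_of_isLongest hnonneg hwI (mul_mem (simple_mem_par cs hi) hy)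
  rw [hL.simple_mul hasc, hLy, add_le_iff_nonpos_left] at hbound
  exact hipos.not_ge hbound

end Stmt17
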